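/- For B_n = C_2 ≀ S_n: Σ_{σ ∈ B_n} q_1^{flag-major(σ)} q_2^{flag-major(σ^{-1})} = Σ_{σ ∈ B_n} q_1^{2·maj(σ) + k(σ)} q_2^{2·maj(σ^{-1}) + k(σ)}, where k(σ) is the number of negative entries of the signed permutation σ and maj is computed with respect to the order -1 < -2 < ... < -n < 1 < 2 < ... < n; in particular k(σ) = k(σ^{-1}). -/

import Mathlib

/-! Left multiplication by `t i` acts on the letters `±1, …, ±(i+1)` as the cyclic shift of the
order `-1 < ⋯ < -(i+1) < 1 < ⋯ < i+1` and fixes the larger letters. Each shift raises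
`2 maj + neg` by one: either `1` becomes `-(i+1)` (one more negative letter, same descents) or
`-1` becomes `i+1` (one negative letter fewer, one descent moved a step to the right), unless
`-1` stands last among the first `i + 1` positions. Matching the letter in position `i + 1` by a
power of `t i` and inducting shows that every signed permutation is some
`t (n-1) ^ k (n-1) * ⋯ * t 0 ^ k 0` with `k i < 2 (i+1)`, and along any such product `2 maj + neg`
equals `∑ k i`. So flag-major = 2 maj + neg pointwise, whatever factorization `flagMajor` picks;
and `neg σ = neg σ⁻¹` since `σ⁻¹` carries the colours of `σ` to other positions. -/

open Finset

@[ext]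
structure GenPerm (m n : ℕ) where
  σ : Equiv.Perm (Fin n)
  c : Fin n → ZMod m
deriving DecidableEq

namespace GenPerm

variable {m n : ℕ}

instance [NeZero m] : Fintype (GenPerm m n) :=
  Fintype.ofEquiv (Equiv.Perm (Fin n) × (Fin n → ZMod m))
    { toFun := fun p => ⟨p.1, p.2⟩
      invFun := fun g => (g.σ, g.c)
      left_inv := fun p => rfl
      right_inv := fun g => rfl }

instance : Mul (GenPerm m n) := ⟨fun g h => ⟨g.σ * h.σ, fun j => g.c (h.σ j) + h.c j⟩⟩
instance : One (GenPerm m n) := ⟨⟨1, 0⟩⟩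
instance : Inv (GenPerm m n) := ⟨fun g => ⟨g.σ⁻¹, fun j => - g.c (g.σ⁻¹ j)⟩⟩

@[simp] lemma mul_σ (g h : GenPerm m n) : (g * h).σ = g.σ * h.σ := rfl
@[simp] lemma mul_c (g h : GenPerm m n) (j : Fin n) : (g * h).c j = g.c (h.σ j) + h.c j := rfl
@[simp] lemma one_σ : (1 : GenPerm m n).σ = 1 := rfl
@[simp] lemma one_c (j : Fin n) : (1 : GenPerm m n).c j = 0 := rfl
@[simp] lemma inv_σ (g : GenPerm m n) : (g⁻¹).σ = g.σ⁻¹ := rfl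
@[simp] lemma inv_c (g : GenPerm m n) (j : Fin n) : (g⁻¹).c j = - g.c (g.σ⁻¹ j) := rfl

instance : Group (GenPerm m n) where
  mul_assoc a b c := by
    ext j
    · simp [mul_assoc]
    · simp [add_assoc]
  one_mul a := by
    ext j
    · simp
    · simp
  mul_one a := by
    ext j
    · simp
    · simp
  inv_mul_cancel a := by
    ext j
    · simp
    · simp

/-- The generator `s i`: `s 0` multiplies the first letter's phase by `ω`;
for `1 ≤ i < n`, `s i` swaps positions `i` and `i+1` (1-indexed), i.e. `i-1` and `i`
(0-indexed). -/
def s (i : ℕ) : GenPerm m n :=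
  if h : i < n then
    if h0 : i = 0 then ⟨1, fun j => if j = ⟨0, by omega⟩ then 1 else 0⟩
    else ⟨Equiv.swap ⟨i - 1, by omega⟩ ⟨i, h⟩, 0⟩
  else 1

/-- `t i = s i * s (i-1) * ⋯ * s 1 * s 0`. -/
def t (i : ℕ) : GenPerm m n := ((List.range (i + 1)).map (fun j => (s (i - j) : GenPerm m n))).prod

/-- `rep k = t (n-1) ^ k (n-1) * ⋯ * t 0 ^ k 0`. -/
def rep (k : Fin n → ℕ) : GenPerm m n :=
  (List.ofFn (fun i : Fin n => (t (i : ℕ) : GenPerm m n) ^ k i)).reverse.prod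

open scoped Classical in
/-- The flag major index: the sum of the exponents in the canonical representation
`π = t (n-1) ^ k (n-1) * ⋯ * t 0 ^ k 0` with `0 ≤ k i < m * (i+1)`. -/
noncomputable def flagMajor (π : GenPerm m n) : ℕ :=
  if h : ∃ k : Fin n → ℕ, (∀ i : Fin n, k i < m * ((i : ℕ) + 1)) ∧ π = rep k
  then ∑ i, h.choose i else 0

/-- The major index of a generalized permutation with respect to the linear order
`1·ω^{m-1} < ⋯ < n·ω^{m-1} < ⋯ < 1·ω < ⋯ < n·ω < 1 < ⋯ < n`
(a 1-indexed descent at position `i` contributes `i`). -/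
def majG (π : GenPerm m n) : ℕ :=
  ∑ i ∈ Finset.range n, if h : i + 1 < n then
    (if (π.c ⟨i, by omega⟩).val < (π.c ⟨i + 1, h⟩).val ∨
        (π.c ⟨i, by omega⟩ = π.c ⟨i + 1, h⟩ ∧ π.σ ⟨i + 1, h⟩ < π.σ ⟨i, by omega⟩)
     then i + 1 else 0) else 0

/-- Coxeter length with respect to the generators `s 0, s 1, …, s (n-1)`. -/
noncomputable def len (π : GenPerm m n) : ℕ :=
  sInf {l | ∃ w : List (Fin n), w.length = l ∧ (w.map (fun i => (s (i : ℕ) : GenPerm m n))).prod = π}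


/-- The number of negative entries of a signed permutation. -/
def kneg {n : ℕ} (σ : GenPerm 2 n) : ℕ :=
  (Finset.univ.filter (fun i : Fin n => σ.c i = 1)).card

lemma s_zero_σ (j : Fin n) : (s 0 : GenPerm m n).σ j = j := by
  unfold s
  split_ifs <;> simp_all

lemma s_zero_c (hn : 0 < n) (j : Fin n) :
    (s 0 : GenPerm m n).c j = if (j : ℕ) = 0 then 1 else 0 := by
  simp [s, hn, Fin.ext_iff]

lemma s_σ_val {i : ℕ} (hi0 : 0 < i) (hi : i < n) (j : Fin n) :
    ((s i : GenPerm m n).σ j : ℕ) =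
      if (j : ℕ) = i - 1 then i else if (j : ℕ) = i then i - 1 else j := by
  simp only [s, dif_pos hi, dif_neg hi0.ne', Equiv.swap_apply_def]
  split_ifs with h1 h2 h3 h4 <;> simp only [Fin.ext_iff] at * <;> omega

lemma s_c {i : ℕ} (hi0 : 0 < i) (hi : i < n) (j : Fin n) : (s i : GenPerm m n).c j = 0 := by
  simp [s, hi, hi0.ne']

lemma t_zero : (t 0 : GenPerm m n) = s 0 := by
  simp [t]

lemma t_succ (i : ℕ) : (t (i + 1) : GenPerm m n) = s (i + 1) * t i := by
  simp only [t, List.range_succ_eq_map, List.map_cons, List.map_map, List.prod_cons]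
  congr 3
  ext j
  simp

lemma t_σ_val {i : ℕ} (hi : i < n) (j : Fin n) :
    ((t i : GenPerm m n).σ j : ℕ) =
      if (j : ℕ) = 0 then i else if (j : ℕ) ≤ i then j - 1 else j := by
  induction i with
  | zero => rw [t_zero, s_zero_σ]; split_ifs <;> omega
  | succ i ih =>
    rw [t_succ, mul_σ, Equiv.Perm.mul_apply, s_σ_val i.succ_pos hi, ih (by omega)]
    split_ifs <;> omega

lemma t_c {i : ℕ} (hi : i < n) (j : Fin n) :
    (t i : GenPerm m n).c j = if (j : ℕ) = 0 then 1 else 0 := by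
  induction i with
  | zero => rw [t_zero, s_zero_c (by omega)]
  | succ i ih => rw [t_succ, mul_c, s_c i.succ_pos hi, ih (by omega), zero_add]

/-- The copy of `C_m ≀ S_k` inside `C_m ≀ S_n`. -/
def parabolic (k : ℕ) : Subgroup (GenPerm m n) where
  carrier := {σ | ∀ j : Fin n, k ≤ (j : ℕ) → σ.σ j = j ∧ σ.c j = 0}
  mul_mem' {a b} ha hb j hj := by
    obtain ⟨hbσ, hbc⟩ := hb j hj
    obtain ⟨haσ, hac⟩ := ha j hj
    simp [hbσ, hbc, haσ, hac]
  one_mem' _ _ := ⟨rfl, rfl⟩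
  inv_mem' {a} ha j hj := by
    obtain ⟨haσ, hac⟩ := ha j hj
    have : a.σ⁻¹ j = j := by rw [Equiv.Perm.inv_eq_iff_eq, haσ]
    simp [this, hac]

lemma parabolic_mono {k l : ℕ} (h : k ≤ l) :
    (parabolic k : Subgroup (GenPerm m n)) ≤ parabolic l :=
  fun _ hσ j hj => hσ j (h.trans hj)

lemma parabolic_of_le {k : ℕ} (h : n ≤ k) : (parabolic k : Subgroup (GenPerm m n)) = ⊤ :=
  eq_top_iff.mpr fun _ _ j hj => absurd j.isLt (by omega)

lemma val_lt_of_mem_parabolic {k : ℕ} {σ : GenPerm m n} (hσ : σ ∈ parabolic k) {j : Fin n}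
    (hj : (j : ℕ) < k) : (σ.σ j : ℕ) < k := by
  by_contra! hge
  have := σ.σ.injective (hσ (σ.σ j) hge).1
  omega

lemma t_mem_parabolic (i : ℕ) : (t i : GenPerm m n) ∈ parabolic (i + 1) := by
  intro j hj
  by_cases hi : i < n
  · refine ⟨Fin.ext ?_, by rw [t_c hi, if_neg (by omega)]⟩
    rw [t_σ_val hi]
    split_ifs <;> omega
  · omega

def partialRep (e : ℕ → ℕ) : ℕ → GenPerm m n
  | 0 => 1
  | k + 1 => t k ^ e k * partialRep e k

lemma partialRep_congr {e e' : ℕ → ℕ} {k : ℕ} (h : ∀ i < k, e i = e' i) :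
    (partialRep e k : GenPerm m n) = partialRep e' k := by
  induction k with
  | zero => rfl
  | succ k ih =>
    rw [partialRep, partialRep, h k k.lt_succ_self, ih fun i hi => h i (by omega)]

lemma partialRep_mem_parabolic (e : ℕ → ℕ) (k : ℕ) :
    (partialRep e k : GenPerm m n) ∈ parabolic k := by
  induction k with
  | zero => exact one_mem _
  | succ k ih =>
    exact mul_mem (pow_mem (t_mem_parabolic k) _) (parabolic_mono k.le_succ ih)

lemma ofFn_prod_eq_partialRep (e : ℕ → ℕ) (k : ℕ) :
    (List.ofFn fun i : Fin k => (t i : GenPerm m n) ^ e i).reverse.prod = partialRep e k := by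
  induction k with
  | zero => rfl
  | succ k ih =>
    rw [List.ofFn_succ', List.concat_eq_append, List.reverse_append, List.prod_append]
    simp [partialRep, ih]

lemma rep_eq_partialRep (a : Fin n → ℕ) :
    (rep a : GenPerm m n) = partialRep (fun i => if h : i < n then a ⟨i, h⟩ else 0) n := by
  rw [rep, ← ofFn_prod_eq_partialRep]
  simp

def descentMaj (r : Fin n → ℕ) : ℕ :=
  ∑ i ∈ range n, if h : i + 1 < n then
    (if r ⟨i + 1, h⟩ < r ⟨i, by omega⟩ then i + 1 else 0) else 0

lemma descentMaj_comp_of_strictMonoOn {r : Fin n → ℕ} {f : ℕ → ℕ} {S : Set ℕ}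
    (hf : StrictMonoOn f S) (hr : ∀ j, r j ∈ S) : descentMaj (f ∘ r) = descentMaj r := by
  refine sum_congr rfl fun i _ => ?_
  split_ifs with h h1 h2 h2 <;> simp_all [hf.lt_iff_lt (hr _) (hr _)]

def cyclePred (M x : ℕ) : ℕ := if x = 0 then M - 1 else if x < M then x - 1 else x

lemma cyclePred_strictMonoOn (M : ℕ) : StrictMonoOn (cyclePred M) {x | x ≠ 0} := by
  intro x hx y hy hxy
  simp only [Set.mem_ofPred_eq] at hx hy
  simp only [cyclePred, hx, hy, if_false]
  split_ifs <;> omega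

/-- The letter `0` at `p` becomes larger than its neighbours: the descent into `p` (weight `p`)
is replaced by the descent out of `p` (weight `p + 1`). -/
lemma descentMaj_comp_cyclePred {r : Fin n → ℕ} {M : ℕ} {p : Fin n} (hp : r p = 0)
    (hr : ∀ j ≠ p, r j ≠ 0) (hpn : (p : ℕ) + 1 < n)
    (hM : ∀ j : Fin n, (j : ℕ) ≤ p + 1 → r j < M) :
    descentMaj (cyclePred M ∘ r) = descentMaj r + 1 := by
  have hterm : ∀ i ∈ range n,
      (if h : i + 1 < n then
        (if cyclePred M (r ⟨i + 1, h⟩) < cyclePred M (r ⟨i, by omega⟩) then i + 1 else 0)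
        else 0)
        + (if i + 1 = p then i + 1 else 0)
      = (if h : i + 1 < n then (if r ⟨i + 1, h⟩ < r ⟨i, by omega⟩ then i + 1 else 0) else 0)
        + (if i = p then i + 1 else 0) := by
    intro i _
    by_cases h : i + 1 < n
    · simp only [dif_pos h]
      by_cases hi : i = p
      · have hb := hr ⟨i + 1, h⟩ (fun e => by simp [Fin.ext_iff] at e; omega)
        have hbM := hM ⟨i + 1, h⟩ (by simp; omega)
        rw [show (⟨i, by omega⟩ : Fin n) = p from Fin.ext hi, hp]
        simp only [cyclePred, if_neg hb, if_pos hbM, if_neg (show i + 1 ≠ p by omega),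
          if_pos hi, Nat.not_lt_zero, if_false]
        split_ifs <;> omega
      by_cases hi1 : i + 1 = p
      · have ha := hr ⟨i, by omega⟩ (fun e => by simp [Fin.ext_iff] at e; omega)
        have haM := hM ⟨i, by omega⟩ (by simp; omega)
        rw [show (⟨i + 1, h⟩ : Fin n) = p from Fin.ext hi1, hp]
        simp only [cyclePred, if_neg ha, if_pos haM, if_pos hi1, if_neg hi]
        split_ifs <;> omega
      · have ha := hr ⟨i, by omega⟩ (fun e => hi (by simp [← e]))
        have hb := hr ⟨i + 1, h⟩ (fun e => hi1 (by simp [← e]))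
        simp [hi, hi1, (cyclePred_strictMonoOn M).lt_iff_lt hb ha]
    · simp only [dif_neg h]
      split_ifs <;> omega
  have hsum := sum_congr rfl hterm
  rw [sum_add_distrib, sum_add_distrib, sum_ite_eq' (range n) (p : ℕ) (· + 1),
    if_pos (mem_range.mpr p.isLt)] at hsum
  have hprev : ∑ i ∈ range n, (if i + 1 = p then i + 1 else 0) = p := by
    rcases Nat.eq_zero_or_eq_succ_pred (p : ℕ) with h0 | hsucc
    · simp [h0]
    · rw [hsucc]
      simp [sum_ite_eq']
      omega
  rw [hprev] at hsum
  simp only [descentMaj, Function.comp_apply]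
  omega

lemma zmod_two_eq_zero_or_one : ∀ x : ZMod 2, x = 0 ∨ x = 1 := by
  decide

lemma val_lt_of_c_eq_one {k : ℕ} {σ : GenPerm 2 n} (hσ : σ ∈ parabolic k) {j : Fin n}
    (hc : σ.c j = 1) : (σ.σ j : ℕ) < k := by
  refine val_lt_of_mem_parabolic hσ (not_le.mp fun hj => ?_)
  simp [(hσ j hj).2] at hc

/-- The rank, counted from `0`, of the letter at position `j` in the order
`-1 < ⋯ < -k < 1 < ⋯ < k < k + 1 < ⋯`. -/
def rank (k : ℕ) (σ : GenPerm 2 n) (j : Fin n) : ℕ :=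
  if σ.c j = 1 then σ.σ j else k + σ.σ j

lemma majG_descent_iff {k : ℕ} {σ : GenPerm 2 n} (hσ : σ ∈ parabolic k) (a b : Fin n) :
    ((σ.c a).val < (σ.c b).val ∨ σ.c a = σ.c b ∧ σ.σ b < σ.σ a) ↔
      rank k σ b < rank k σ a := by
  have ha := val_lt_of_c_eq_one hσ (j := a)
  have hb := val_lt_of_c_eq_one hσ (j := b)
  rw [Fin.lt_def]
  rcases zmod_two_eq_zero_or_one (σ.c a) with hca | hca <;>
  rcases zmod_two_eq_zero_or_one (σ.c b) with hcb | hcb <;>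
  simp [rank, hca, hcb] at ha hb ⊢
  all_goals omega

lemma majG_eq_descentMaj_rank {k : ℕ} {σ : GenPerm 2 n} (hσ : σ ∈ parabolic k) :
    majG σ = descentMaj (rank k σ) := by
  unfold majG descentMaj
  refine sum_congr rfl fun i _ => ?_
  split_ifs <;> simp_all [majG_descent_iff hσ]

lemma rank_lt {k : ℕ} {σ : GenPerm 2 n} (hσ : σ ∈ parabolic k) {j : Fin n}
    (hj : (j : ℕ) < k) : rank k σ j < 2 * k := by
  have := val_lt_of_mem_parabolic hσ hj
  unfold rank
  split_ifs <;> omega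

lemma eq_of_rank_eq {k : ℕ} {σ τ : GenPerm 2 n} (hσ : σ ∈ parabolic k)
    (hτ : τ ∈ parabolic k) {j : Fin n} (h : rank k σ j = rank k τ j) :
    σ.σ j = τ.σ j ∧ σ.c j = τ.c j := by
  have hσk := val_lt_of_c_eq_one hσ (j := j)
  have hτk := val_lt_of_c_eq_one hτ (j := j)
  rw [Fin.ext_iff]
  unfold rank at h
  rcases zmod_two_eq_zero_or_one (σ.c j) with hσc | hσc <;>
  rcases zmod_two_eq_zero_or_one (τ.c j) with hτc | hτc <;>
  simp [hσc, hτc] at h hσk hτk ⊢ <;> omega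

lemma rank_t_mul {i : ℕ} (hi : i < n) {σ : GenPerm 2 n} (hσ : σ ∈ parabolic (i + 1)) :
    rank (i + 1) (t i * σ) = cyclePred (2 * (i + 1)) ∘ rank (i + 1) σ := by
  funext j
  by_cases hj : (j : ℕ) < i + 1
  · have hv := val_lt_of_mem_parabolic hσ hj
    rcases zmod_two_eq_zero_or_one (σ.c j) with hc | hc <;>
    by_cases hv0 : (σ.σ j : ℕ) = 0 <;>
    simp [rank, cyclePred, t_c hi, hc, hv0, t_σ_val hi] <;> (try split_ifs) <;> omega
  · obtain ⟨hσj, hcj⟩ := hσ j (by omega)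
    simp [rank, cyclePred, t_c hi, hσj, hcj, t_σ_val hi]
    split_ifs <;> omega

lemma kneg_eq_add_one {σ τ : GenPerm 2 n} {p : Fin n} (hσ : σ.c p = 1) (hτ : τ.c p = 0)
    (h : ∀ j ≠ p, σ.c j = τ.c j) : kneg σ = kneg τ + 1 := by
  have hfilter :
      univ.filter (fun j => σ.c j = 1) = insert p (univ.filter fun j => τ.c j = 1) := by
    ext j
    by_cases hj : j = p
    · simp [hj, hσ]
    · simp [hj, h j hj]
  rw [kneg, kneg, hfilter, card_insert_of_notMem (by simp [hτ])]

lemma kneg_inv (σ : GenPerm 2 n) : kneg σ = kneg σ⁻¹ := by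
  simp only [kneg, card_filter, inv_c, ZMod.neg_eq_self_mod_two]
  exact (Equiv.sum_comp σ.σ⁻¹ fun j => if σ.c j = 1 then 1 else 0).symm

def fmaj (σ : GenPerm 2 n) : ℕ := 2 * majG σ + kneg σ

lemma fmaj_one : fmaj (1 : GenPerm 2 n) = 0 := by
  have hmaj : majG (1 : GenPerm 2 n) = 0 := by
    refine sum_eq_zero fun i _ => ?_
    split_ifs with h h1 <;> simp_all [Fin.lt_def]
  simp [fmaj, hmaj, kneg]

lemma rank_eq_zero_iff {k : ℕ} (hk : 0 < k) (σ : GenPerm 2 n) (j : Fin n) :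
    rank k σ j = 0 ↔ (σ.σ j : ℕ) = 0 ∧ σ.c j = 1 := by
  unfold rank
  split_ifs with h
  · simp [h]
  · simp [h]
    omega

lemma fmaj_t_mul {i : ℕ} (hi : i < n) {σ : GenPerm 2 n} (hσ : σ ∈ parabolic (i + 1))
    (hlast : rank (i + 1) σ ⟨i, hi⟩ ≠ 0) : fmaj (t i * σ) = fmaj σ + 1 := by
  set p := σ.σ⁻¹ ⟨0, by omega⟩
  have hval : ∀ j, (σ.σ j : ℕ) = 0 ↔ j = p := fun j => by
    rw [Equiv.Perm.eq_inv_iff_eq, Fin.ext_iff]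
  have hc : ∀ j, (t i * σ).c j = (if j = p then 1 else 0) + σ.c j := fun j => by
    simp only [mul_c, t_c hi, hval]
  have hrank : ∀ j, rank (i + 1) σ j = 0 ↔ j = p ∧ σ.c j = 1 := fun j => by
    rw [rank_eq_zero_iff i.succ_pos, hval]
  have hmaj : majG (t i * σ) = descentMaj (cyclePred (2 * (i + 1)) ∘ rank (i + 1) σ) := by
    rw [majG_eq_descentMaj_rank (mul_mem (t_mem_parabolic i) hσ), rank_t_mul hi hσ]
  rcases zmod_two_eq_zero_or_one (σ.c p) with hcp | hcp
  · have hkneg : kneg (t i * σ) = kneg σ + 1 :=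
      kneg_eq_add_one (by simp [hc, hcp]) hcp fun j hj => by simp [hc, hj]
    have hne : ∀ j, rank (i + 1) σ j ∈ {x | x ≠ 0} := fun j h0 => by
      obtain ⟨rfl, h1⟩ := (hrank j).mp h0
      simp [hcp] at h1
    rw [descentMaj_comp_of_strictMonoOn (cyclePred_strictMonoOn _) hne] at hmaj
    simp only [fmaj, hmaj, hkneg, majG_eq_descentMaj_rank hσ]
    omega
  · have hkneg : kneg σ = kneg (t i * σ) + 1 :=
      kneg_eq_add_one hcp (by simp [hc, hcp]; decide) fun j hj => by simp [hc, hj]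
    have hp0 : rank (i + 1) σ p = 0 := (hrank p).mpr ⟨rfl, hcp⟩
    have hpi : (p : ℕ) < i := by
      have hne : (p : ℕ) ≠ i := fun h => hlast (by
        rwa [show (⟨i, hi⟩ : Fin n) = p from Fin.ext h.symm])
      have hlt : (p : ℕ) < i + 1 :=
        val_lt_of_mem_parabolic (inv_mem hσ) (j := ⟨0, by omega⟩) i.succ_pos
      omega
    rw [descentMaj_comp_cyclePred hp0 (fun j hj h0 => hj ((hrank j).mp h0).1) (by omega)
      fun j hj => rank_lt hσ (by omega)] at hmaj
    simp only [fmaj, hmaj, hkneg, majG_eq_descentMaj_rank hσ]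
    omega

lemma tpow_mul_mem_parabolic {i : ℕ} (a : ℕ) {σ : GenPerm m n} (hσ : σ ∈ parabolic i) :
    t i ^ a * σ ∈ parabolic (i + 1) :=
  mul_mem (pow_mem (t_mem_parabolic i) a) (parabolic_mono i.le_succ hσ)

lemma rank_tpow_mul_self {i a : ℕ} (hi : i < n) (ha : a < 2 * (i + 1)) {σ : GenPerm 2 n}
    (hσ : σ ∈ parabolic i) : rank (i + 1) (t i ^ a * σ) ⟨i, hi⟩ = 2 * i + 1 - a := by
  induction a with
  | zero =>
    obtain ⟨hσi, hci⟩ := hσ ⟨i, hi⟩ le_rfl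
    simp [rank, hσi, hci]
    omega
  | succ a ih =>
    rw [pow_succ', mul_assoc, rank_t_mul hi (tpow_mul_mem_parabolic a hσ), Function.comp_apply,
      ih (by omega), cyclePred, if_neg (by omega), if_pos (by omega)]
    omega

lemma fmaj_tpow_mul {i a : ℕ} (hi : i < n) (ha : a < 2 * (i + 1)) {σ : GenPerm 2 n}
    (hσ : σ ∈ parabolic i) : fmaj (t i ^ a * σ) = fmaj σ + a := by
  induction a with
  | zero => simp
  | succ a ih =>
    rw [pow_succ', mul_assoc, fmaj_t_mul hi (tpow_mul_mem_parabolic a hσ)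
      (by rw [rank_tpow_mul_self hi (by omega) hσ]; omega), ih (by omega), add_assoc]

lemma fmaj_partialRep {e : ℕ → ℕ} {k : ℕ} (hk : k ≤ n)
    (he : ∀ i < k, e i < 2 * (i + 1)) :
    fmaj (partialRep e k : GenPerm 2 n) = ∑ i ∈ range k, e i := by
  induction k with
  | zero => exact fmaj_one
  | succ k ih =>
    rw [partialRep, fmaj_tpow_mul (by omega) (he k k.lt_succ_self) (partialRep_mem_parabolic e k),
      ih (by omega) fun i hi => he i (by omega), sum_range_succ]

/-- `t i ^ a` puts the letter of rank `2 i + 1 - a` at position `i`, so every possible letter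
is reached. -/
lemma exists_tpow_inv_mul_mem {i : ℕ} (hi : i < n) {τ : GenPerm 2 n}
    (hτ : τ ∈ parabolic (i + 1)) :
    ∃ a < 2 * (i + 1), (t i ^ a)⁻¹ * τ ∈ parabolic i := by
  have hrank := rank_lt hτ (j := ⟨i, hi⟩) i.lt_succ_self
  set a := 2 * i + 1 - rank (i + 1) τ ⟨i, hi⟩
  have hpow := rank_tpow_mul_self hi (a := a) (by omega) (one_mem (parabolic i))
  rw [mul_one] at hpow
  obtain ⟨hσi, hci⟩ :=
    eq_of_rank_eq (pow_mem (t_mem_parabolic i) a) hτ (j := ⟨i, hi⟩) (by omega)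
  refine ⟨a, by omega, fun j hj => ?_⟩
  rcases hj.eq_or_lt with hj | hj
  · obtain rfl : j = ⟨i, hi⟩ := Fin.ext hj.symm
    simp [← hσi, hci, CharTwo.add_self_eq_zero]
  · exact mul_mem (inv_mem (pow_mem (t_mem_parabolic i) a)) hτ j hj

lemma exists_partialRep {k : ℕ} (hk : k ≤ n) {τ : GenPerm 2 n} (hτ : τ ∈ parabolic k) :
    ∃ e : ℕ → ℕ, (∀ i < k, e i < 2 * (i + 1)) ∧ τ = partialRep e k := by
  induction k generalizing τ with
  | zero =>
    refine ⟨0, fun i hi => absurd hi (Nat.not_lt_zero i), ?_⟩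
    ext j
    · exact congrArg Fin.val (hτ j (Nat.zero_le _)).1
    · exact (hτ j (Nat.zero_le _)).2
  | succ k ih =>
    obtain ⟨a, ha, hmem⟩ := exists_tpow_inv_mul_mem (by omega) hτ
    obtain ⟨e, he, hτe⟩ := ih (by omega) hmem
    refine ⟨Function.update e k a, fun i hi => ?_, ?_⟩
    · rcases (Nat.lt_succ_iff.mp hi).eq_or_lt with rfl | hi
      · simpa using ha
      · simpa [hi.ne] using he i hi
    · rw [partialRep, Function.update_self,
        partialRep_congr fun i hi => Function.update_of_ne hi.ne _ _, ← hτe, mul_inv_cancel_left]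

lemma exists_rep (π : GenPerm 2 n) :
    ∃ a : Fin n → ℕ, (∀ i : Fin n, a i < 2 * (i + 1)) ∧ π = rep a := by
  obtain ⟨e, he, hπ⟩ :=
    exists_partialRep le_rfl (by simp [parabolic_of_le le_rfl] : π ∈ parabolic n)
  refine ⟨fun i => e i, fun i => he i i.isLt, ?_⟩
  rw [rep_eq_partialRep, hπ]
  exact partialRep_congr fun i hi => by simp [hi]

lemma fmaj_rep {a : Fin n → ℕ} (ha : ∀ i : Fin n, a i < 2 * (i + 1)) :
    fmaj (rep a : GenPerm 2 n) = ∑ i, a i := by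
  rw [rep_eq_partialRep, fmaj_partialRep le_rfl fun i hi => by simpa [hi] using ha ⟨i, hi⟩,
    ← Fin.sum_univ_eq_sum_range (fun i => if h : i < n then a ⟨i, h⟩ else 0)]
  simp

lemma flagMajor_eq_fmaj (π : GenPerm 2 n) : flagMajor π = fmaj π := by
  have h := exists_rep π
  rw [flagMajor, dif_pos h]
  obtain ⟨hb, hπ⟩ := h.choose_spec
  conv_rhs => rw [hπ]
  exact (fmaj_rep hb).symm

/-- in `B_n = C_2 ≀ S_n`,
`Σ_σ q_1^{flag-major(σ)} q_2^{flag-major(σ⁻¹)} =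
 Σ_σ q_1^{2·maj(σ)+k(σ)} q_2^{2·maj(σ⁻¹)+k(σ)}`,
where `maj` is taken with respect to `-1 < -2 < ⋯ < -n < 1 < 2 < ⋯ < n`
(this is the order used by `majG` for `m = 2`) and `k(σ)` is the number of
negative entries; in particular `k(σ) = k(σ⁻¹)`. -/
theorem flagMajor_sum_eq (n : ℕ) :
    (∑ σ : GenPerm 2 n,
        (MvPolynomial.X 0 : MvPolynomial (Fin 2) ℚ) ^ flagMajor σ *
          (MvPolynomial.X 1 : MvPolynomial (Fin 2) ℚ) ^ flagMajor σ⁻¹ =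
      ∑ σ : GenPerm 2 n,
        (MvPolynomial.X 0 : MvPolynomial (Fin 2) ℚ) ^ (2 * majG σ + kneg σ) *
          (MvPolynomial.X 1 : MvPolynomial (Fin 2) ℚ) ^ (2 * majG σ⁻¹ + kneg σ)) ∧
    (∀ σ : GenPerm 2 n, kneg σ = kneg σ⁻¹) := by
  refine ⟨sum_congr rfl fun σ _ => ?_, kneg_inv⟩
  rw [flagMajor_eq_fmaj, flagMajor_eq_fmaj, fmaj, fmaj, ← kneg_inv]

end GenPerm
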